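/- arXiv:2112.07762 — 4 statements merged into one kernel-verified Lean document; each statement's English description precedes it below -/
import Mathlib

section
/- For every positive integer n, the number of partitions of n in which the smallest part occurs at least twice equals 2·p(n) − p(n+1), where p denotes the partition function. -/
/-!
Split the partitions of `n + 1` according to whether they contain a part `1`. Deleting a part `1`
matches those that do with all partitions of `n`. For those that do not, lowering one copy of the
smallest part `s ≥ 2` to `s - 1` gives a partition of `n` whose smallest part occurs exactly once,
and every such partition arises in exactly one way. Hence `p(n + 1) = 2 p(n) - R(n)`, where `R(n)`
counts the partitions of `n` with a repeated smallest part.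
-/

open Multiset

lemma Nat.card_subtype_add_card_subtype_compl {α : Type*} [Finite α] (p : α → Prop) :
    Nat.card {x // p x} + Nat.card {x // ¬p x} = Nat.card α := by
  classical
  rw [← Nat.card_sum, Nat.card_congr (Equiv.sumCompl p)]

-- `0` on the empty multiset, the junk value of `sInf ∅`.
noncomputable def minElem (m : Multiset ℕ) : ℕ := sInf {t | t ∈ m}

def HasRepeatedMin (m : Multiset ℕ) : Prop :=
  ∃ s ∈ m, (∀ t ∈ m, s ≤ t) ∧ 2 ≤ m.count s

section minElem

variable {m : Multiset ℕ} {b t : ℕ}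

lemma minElem_mem (h : m ≠ 0) : minElem m ∈ m :=
  Nat.sInf_mem (exists_mem_of_ne_zero h)

lemma minElem_le (h : t ∈ m) : minElem m ≤ t :=
  Nat.sInf_le h

lemma minElem_cons (h : ∀ t ∈ m, b ≤ t) : minElem (b ::ₘ m) = b :=
  IsLeast.csInf_eq ⟨mem_cons_self b m, fun t ht => by
    rcases mem_cons.1 ht with rfl | ht
    exacts [le_rfl, h t ht]⟩

lemma count_cons_self_of_forall_lt (h : ∀ t ∈ m, b < t) : (b ::ₘ m).count b = 1 := by
  rw [count_cons_self, count_eq_zero.2 fun hb => lt_irrefl b (h b hb)]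

lemma not_hasRepeatedMin_iff (h : m ≠ 0) : ¬HasRepeatedMin m ↔ m.count (minElem m) = 1 := by
  have hpos : 1 ≤ m.count (minElem m) := one_le_count_iff_mem.2 (minElem_mem h)
  constructor
  · intro hm
    by_contra hne
    exact hm ⟨minElem m, minElem_mem h, fun t => minElem_le, by omega⟩
  · rintro hc ⟨s, hs, hmin, hs2⟩
    rw [le_antisymm (minElem_le hs) (hmin _ (minElem_mem h))] at hc
    omega

lemma minElem_lt_of_mem_erase (hc : m.count (minElem m) = 1) (ht : t ∈ m.erase (minElem m)) :
    minElem m < t := by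
  refine (minElem_le (mem_of_mem_erase ht)).lt_of_ne ?_
  rintro rfl
  have := count_erase_self (minElem m) m
  have := one_le_count_iff_mem.2 ht
  omega

end minElem

namespace Nat.Partition

variable {n k : ℕ}

lemma parts_ne_zero (hn : n ≠ 0) (π : n.Partition) : π.parts ≠ 0 := by
  intro h
  have := π.parts_sum
  simp [h] at this
  omega

def replacePart (π : n.Partition) {a : ℕ} (ha : a ∈ π.parts) (b : ℕ) (hb : 0 < b)
    (hk : n + b = k + a) : k.Partition where
  parts := b ::ₘ π.parts.erase a
  parts_pos hi := by
    rcases mem_cons.1 hi with rfl | hi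
    exacts [hb, π.parts_pos (mem_of_mem_erase hi)]
  parts_sum := by
    have := π.parts_sum
    rw [← cons_erase ha, sum_cons] at this
    rw [sum_cons]
    omega

@[simp]
lemma replacePart_parts (π : n.Partition) {a : ℕ} (ha : a ∈ π.parts) (b : ℕ) (hb : 0 < b)
    (hk : n + b = k + a) : (π.replacePart ha b hb hk).parts = b ::ₘ π.parts.erase a :=
  rfl

lemma one_lt_minElem (π : n.Partition) (hn : n ≠ 0) (h1 : 1 ∉ π.parts) : 1 < minElem π.parts := by
  have hmem := minElem_mem (π.parts_ne_zero hn)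
  have := π.parts_pos hmem
  have : minElem π.parts ≠ 1 := fun h => h1 (h ▸ hmem)
  omega

noncomputable def lowerMin (π : (n + 1).Partition) (h1 : 1 ∉ π.parts) : n.Partition :=
  have := π.one_lt_minElem n.succ_ne_zero h1
  π.replacePart (minElem_mem (π.parts_ne_zero n.succ_ne_zero)) (minElem π.parts - 1)
    (by omega) (by omega)

noncomputable def raiseMin (π : n.Partition) (hn : n ≠ 0) : (n + 1).Partition :=
  π.replacePart (minElem_mem (π.parts_ne_zero hn)) (minElem π.parts + 1) (by omega) (by omega)

lemma minElem_lowerMin (π : (n + 1).Partition) (h1 : 1 ∉ π.parts) :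
    minElem (π.lowerMin h1).parts = minElem π.parts - 1 :=
  minElem_cons fun _ ht => (Nat.sub_le _ 1).trans (minElem_le (mem_of_mem_erase ht))

lemma not_hasRepeatedMin_lowerMin (π : (n + 1).Partition) (h1 : 1 ∉ π.parts) :
    ¬HasRepeatedMin (π.lowerMin h1).parts := by
  have := π.one_lt_minElem n.succ_ne_zero h1
  have hne : (π.lowerMin h1).parts ≠ 0 := cons_ne_zero
  rw [not_hasRepeatedMin_iff hne, minElem_lowerMin]
  exact count_cons_self_of_forall_lt fun _ ht => by
    have := minElem_le (mem_of_mem_erase ht)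
    omega

lemma minElem_raiseMin {π : n.Partition} (hn : n ≠ 0) (hπ : ¬HasRepeatedMin π.parts) :
    minElem (π.raiseMin hn).parts = minElem π.parts + 1 :=
  minElem_cons fun _ ht =>
    minElem_lt_of_mem_erase ((not_hasRepeatedMin_iff (parts_ne_zero hn _)).1 hπ) ht

lemma one_notMem_raiseMin {π : n.Partition} (hn : n ≠ 0) (hπ : ¬HasRepeatedMin π.parts) :
    1 ∉ (π.raiseMin hn).parts := by
  have hpos := π.parts_pos (minElem_mem (π.parts_ne_zero hn))
  rw [raiseMin, replacePart_parts, mem_cons]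
  rintro (h | h)
  · omega
  · have := minElem_lt_of_mem_erase ((not_hasRepeatedMin_iff (parts_ne_zero hn _)).1 hπ) h
    omega

lemma raiseMin_lowerMin (π : (n + 1).Partition) (h1 : 1 ∉ π.parts) (hn : n ≠ 0) :
    (π.lowerMin h1).raiseMin hn = π := by
  have := π.one_lt_minElem n.succ_ne_zero h1
  ext : 1
  rw [raiseMin, replacePart_parts, minElem_lowerMin, Nat.sub_add_cancel this.le, lowerMin,
    replacePart_parts, erase_cons_head, cons_erase (minElem_mem (π.parts_ne_zero n.succ_ne_zero))]

lemma lowerMin_raiseMin {π : n.Partition} (hn : n ≠ 0) (hπ : ¬HasRepeatedMin π.parts) :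
    (π.raiseMin hn).lowerMin (one_notMem_raiseMin hn hπ) = π := by
  ext : 1
  rw [lowerMin, replacePart_parts, minElem_raiseMin hn hπ, Nat.add_sub_cancel, raiseMin,
    replacePart_parts, erase_cons_head, cons_erase (minElem_mem (π.parts_ne_zero hn))]

noncomputable def notOneMemEquiv (hn : n ≠ 0) :
    {π : (n + 1).Partition // 1 ∉ π.parts} ≃ {π : n.Partition // ¬HasRepeatedMin π.parts} where
  toFun π := ⟨π.1.lowerMin π.2, π.1.not_hasRepeatedMin_lowerMin π.2⟩
  invFun π := ⟨π.1.raiseMin hn, one_notMem_raiseMin hn π.2⟩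
  left_inv π := Subtype.ext (π.1.raiseMin_lowerMin π.2 hn)
  right_inv π := Subtype.ext (lowerMin_raiseMin hn π.2)

lemma card_succ (hn : n ≠ 0) :
    Nat.card (n + 1).Partition
      = Nat.card n.Partition + Nat.card {π : n.Partition // ¬HasRepeatedMin π.parts} := by
  rw [← Nat.card_subtype_add_card_subtype_compl fun π : (n + 1).Partition => 1 ∈ π.parts,
    Nat.card_congr (partitionWithPartEquiv le_rfl (by omega)), Nat.add_sub_cancel,
    Nat.card_congr (notOneMemEquiv hn)]

end Nat.Partition

/-- For every positive integer `n`, the number of partitions of `n` in which the smallest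
part occurs at least twice equals `2·p(n) − p(n+1)`. -/
theorem stmt_0 (n : ℕ) (hn : 0 < n) :
    (Nat.card {π : n.Partition //
        ∃ s ∈ π.parts, (∀ t ∈ π.parts, s ≤ t) ∧ 2 ≤ π.parts.count s} : ℤ)
      = 2 * (Nat.card (Nat.Partition n) : ℤ) - (Nat.card (Nat.Partition (n + 1)) : ℤ) := by
  have hsplit :=
    Nat.card_subtype_add_card_subtype_compl fun π : n.Partition => HasRepeatedMin π.parts
  have hsucc := Nat.Partition.card_succ hn.ne'
  change (Nat.card {π : n.Partition // HasRepeatedMin π.parts} : ℤ) = _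
  omega
end

section
/- For every positive integer n, there is a bijection between the set of partitions of n whose smallest part occurs exactly once and the set of partitions of n+1 having no part equal to 1 (given by adding 1 to the unique smallest part). -/
/-!
Every part of a partition of `n + 1` with no part `1` is at least `2`, so lowering its smallest
part `t` by one gives a partition of `n` whose smallest part `t - 1` is strictly below all other
parts. Conversely, raising a smallest part `s` that occurs only once keeps `s + 1` a smallest part
and creates no part `1`, so the two operations are mutually inverse.
-/

open Multiset

theorem Multiset.lt_of_mem_erase_of_count_eq_one {α : Type*} [DecidableEq α] [PartialOrder α]
    {m : Multiset α} {s t : α} (hmin : ∀ u ∈ m, s ≤ u) (hcount : m.count s = 1)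
    (ht : t ∈ m.erase s) : s < t := by
  refine lt_of_le_of_ne (hmin t (mem_of_mem_erase ht)) ?_
  rintro rfl
  have := count_pos.2 ht
  rw [count_erase_self, hcount] at this
  exact lt_irrefl 0 this

namespace Nat.Partition

variable {m : ℕ} {s t : ℕ}

theorem exists_mem_parts (π : m.Partition) (hm : m ≠ 0) : ∃ s, s ∈ π.parts := by
  by_contra! h
  have hsum := π.parts_sum
  rw [eq_zero_of_forall_notMem h, sum_zero] at hsum
  exact hm hsum.symm

/-- Equal to `0` for the empty partition of `0`. -/
noncomputable def smallestPart (π : m.Partition) : ℕ :=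
  sInf {s | s ∈ π.parts}

theorem smallestPart_mem (π : m.Partition) (h : ∃ s, s ∈ π.parts) : π.smallestPart ∈ π.parts :=
  Nat.sInf_mem h

theorem smallestPart_le (π : m.Partition) (ht : t ∈ π.parts) : π.smallestPart ≤ t :=
  Nat.sInf_le ht

theorem smallestPart_eq (π : m.Partition) (hs : s ∈ π.parts) (hmin : ∀ t ∈ π.parts, s ≤ t) :
    π.smallestPart = s :=
  IsLeast.csInf_eq ⟨hs, hmin⟩

def incrPart (π : m.Partition) (hs : s ∈ π.parts) : (m + 1).Partition where
  parts := (s + 1) ::ₘ π.parts.erase s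
  parts_pos := by
    intro a ha
    rcases mem_cons.1 ha with rfl | h
    · exact succ_pos s
    · exact π.parts_pos (mem_of_mem_erase h)
  parts_sum := by
    rw [sum_cons, add_right_comm, ← sum_cons, cons_erase hs, π.parts_sum]

def decrPart (π : (m + 1).Partition) (ht : t ∈ π.parts) (h2 : 2 ≤ t) : m.Partition where
  parts := (t - 1) ::ₘ π.parts.erase t
  parts_pos := by
    intro a ha
    rcases mem_cons.1 ha with rfl | h
    · omega
    · exact π.parts_pos (mem_of_mem_erase h)
  parts_sum := by
    have := π.parts_sum
    rw [← cons_erase ht, sum_cons] at this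
    rw [sum_cons]
    omega

theorem decrPart_incrPart {π : m.Partition} {hs : s ∈ π.parts} {ht : t ∈ (π.incrPart hs).parts}
    {h2 : 2 ≤ t} (hts : t = s + 1) : (π.incrPart hs).decrPart ht h2 = π := by
  subst hts
  ext1
  simp only [decrPart, incrPart, erase_cons_head, Nat.add_sub_cancel, cons_erase hs]

theorem incrPart_decrPart {π : (m + 1).Partition} {ht : t ∈ π.parts} {h2 : 2 ≤ t}
    {hs : s ∈ (π.decrPart ht h2).parts} (hst : s = t - 1) : (π.decrPart ht h2).incrPart hs = π := by
  subst hst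
  ext1
  simp only [decrPart, incrPart, erase_cons_head, Nat.sub_add_cancel (one_le_two.trans h2),
    cons_erase ht]

def HasUniqueSmallestPart (π : m.Partition) : Prop :=
  ∃ s ∈ π.parts, (∀ t ∈ π.parts, s ≤ t) ∧ π.parts.count s = 1

namespace HasUniqueSmallestPart

variable {π : m.Partition}

theorem smallestPart_mem (h : π.HasUniqueSmallestPart) : π.smallestPart ∈ π.parts :=
  π.smallestPart_mem (h.imp fun _ hs ↦ hs.1)

theorem smallestPart_lt (h : π.HasUniqueSmallestPart) (ht : t ∈ π.parts.erase π.smallestPart) :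
    π.smallestPart < t := by
  obtain ⟨s, hs, hmin, hcount⟩ := h
  rw [π.smallestPart_eq hs hmin] at ht ⊢
  exact lt_of_mem_erase_of_count_eq_one hmin hcount ht

theorem one_notMem_incrPart (h : π.HasUniqueSmallestPart) :
    1 ∉ (π.incrPart h.smallestPart_mem).parts := by
  have hpos := π.parts_pos h.smallestPart_mem
  intro h1
  rcases mem_cons.1 h1 with h1 | h1
  · omega
  · have := h.smallestPart_lt h1
    omega

theorem smallestPart_incrPart (h : π.HasUniqueSmallestPart) :
    (π.incrPart h.smallestPart_mem).smallestPart = π.smallestPart + 1 := by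
  refine smallestPart_eq _ (mem_cons_self _ _) fun t ht ↦ ?_
  rcases mem_cons.1 ht with rfl | ht
  · rfl
  · exact h.smallestPart_lt ht

end HasUniqueSmallestPart

section NoPartOne

variable {π : (m + 1).Partition}

theorem two_le_smallestPart_of_one_notMem (h : 1 ∉ π.parts) : 2 ≤ π.smallestPart := by
  have hmem := π.smallestPart_mem (π.exists_mem_parts m.succ_ne_zero)
  have hpos := π.parts_pos hmem
  have hne : π.smallestPart ≠ 1 := fun h1 ↦ h (by rwa [h1] at hmem)
  omega

theorem smallestPart_decrPart_of_one_notMem (h : 1 ∉ π.parts)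
    (ht : π.smallestPart ∈ π.parts) :
    (π.decrPart ht (two_le_smallestPart_of_one_notMem h)).smallestPart = π.smallestPart - 1 := by
  refine smallestPart_eq _ (mem_cons_self _ _) fun u hu ↦ ?_
  rcases mem_cons.1 hu with rfl | hu
  · rfl
  · have := π.smallestPart_le (mem_of_mem_erase hu)
    omega

theorem hasUniqueSmallestPart_decrPart_of_one_notMem (h : 1 ∉ π.parts)
    (ht : π.smallestPart ∈ π.parts) :
    (π.decrPart ht (two_le_smallestPart_of_one_notMem h)).HasUniqueSmallestPart := by
  have hlt : ∀ u ∈ π.parts.erase π.smallestPart, π.smallestPart - 1 < u := fun u hu ↦ by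
    have := π.smallestPart_le (mem_of_mem_erase hu)
    have := two_le_smallestPart_of_one_notMem h
    omega
  refine ⟨π.smallestPart - 1, mem_cons_self _ _, fun u hu ↦ ?_, ?_⟩
  · rcases mem_cons.1 hu with rfl | hu
    · rfl
    · exact (hlt u hu).le
  · rw [decrPart, count_cons_self, count_eq_zero.2 fun hmem ↦ lt_irrefl _ (hlt _ hmem)]

end NoPartOne

noncomputable def incrSmallestPartEquiv (m : ℕ) :
    {π : m.Partition // π.HasUniqueSmallestPart} ≃ {π : (m + 1).Partition // 1 ∉ π.parts} where
  toFun π := ⟨π.1.incrPart π.2.smallestPart_mem, π.2.one_notMem_incrPart⟩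
  invFun ρ := ⟨ρ.1.decrPart (ρ.1.smallestPart_mem (ρ.1.exists_mem_parts m.succ_ne_zero))
      (two_le_smallestPart_of_one_notMem ρ.2),
    hasUniqueSmallestPart_decrPart_of_one_notMem ρ.2 _⟩
  left_inv π := Subtype.ext <| by
    dsimp only
    exact decrPart_incrPart π.2.smallestPart_incrPart
  right_inv ρ := Subtype.ext <| by
    dsimp only
    exact incrPart_decrPart (smallestPart_decrPart_of_one_notMem ρ.2 _)

theorem incrSmallestPartEquiv_apply_parts {π : {π : m.Partition // π.HasUniqueSmallestPart}}
    (hs : s ∈ π.1.parts) (hmin : ∀ t ∈ π.1.parts, s ≤ t) :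
    (incrSmallestPartEquiv m π).1.parts = (s + 1) ::ₘ π.1.parts.erase s := by
  rw [← π.1.smallestPart_eq hs hmin]
  rfl

end Nat.Partition

open Nat.Partition in
theorem stmt_4_general (n : ℕ) :
    ∃ e : {π : n.Partition //
        ∃ s ∈ π.parts, (∀ t ∈ π.parts, s ≤ t) ∧ π.parts.count s = 1}
      ≃ {π : (n + 1).Partition // 1 ∉ π.parts},
      ∀ π s, s ∈ π.1.parts → (∀ t ∈ π.1.parts, s ≤ t) →
        ((e π : {π : (n + 1).Partition // 1 ∉ π.parts}) : (n + 1).Partition).parts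
          = (s + 1) ::ₘ π.1.parts.erase s :=
  ⟨incrSmallestPartEquiv n, fun _ _ ↦ incrSmallestPartEquiv_apply_parts⟩

/-- There is a bijection between the partitions of `n` whose smallest part occurs exactly
once and the partitions of `n+1` with no part equal to `1`, given by adding `1` to the
unique smallest part. -/
theorem stmt_4 (n : ℕ) (hn : 0 < n) :
    ∃ e : {π : n.Partition //
        ∃ s ∈ π.parts, (∀ t ∈ π.parts, s ≤ t) ∧ π.parts.count s = 1}
      ≃ {π : (n + 1).Partition // 1 ∉ π.parts},
      ∀ π s, s ∈ π.1.parts → (∀ t ∈ π.1.parts, s ≤ t) →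
        ((e π : {π : (n + 1).Partition // 1 ∉ π.parts}) : (n + 1).Partition).parts
          = (s + 1) ::ₘ π.1.parts.erase s :=
  stmt_4_general n
end

section
/- For |q| < 1, ∑_{k≥1} q^{2k}/(q^k;q)_∞ = 2/(q;q)_∞ − 1/(q·(q;q)_∞) + 1/q − 1. -/
/-!
Write `(a;q)_∞ = (1 - a) (aq;q)_∞`. With `h(a) = (a + q - 1) / (q (a;q)_∞)` this recursion gives
`a² / (a;q)_∞ = h(a) - h(aq)`, so the series telescopes along `a = q, q², …` to `h(q) - h(0)`,
because `(a;q)_∞` is continuous in `a` with `(0;q)_∞ = 1`.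
-/

open Filter Topology

section

variable {𝕜 : Type*} [NormedField 𝕜]

noncomputable def qPochhammer (a q : 𝕜) : 𝕜 := ∏' j : ℕ, (1 - a * q ^ j)

@[simp]
lemma qPochhammer_zero_left (q : 𝕜) : qPochhammer 0 q = 1 := by
  simp [qPochhammer]

variable {q : 𝕜} (hq : ‖q‖ < 1)
include hq

lemma summable_norm_mul_pow (a : 𝕜) : Summable fun j : ℕ => ‖a * q ^ j‖ := by
  simpa [norm_mul, norm_pow] using
    (summable_geometric_of_lt_one (norm_nonneg q) hq).mul_left ‖a‖

variable [CompleteSpace 𝕜]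

lemma multipliable_one_sub_mul_pow (a : 𝕜) : Multipliable fun j : ℕ => 1 - a * q ^ j := by
  simpa [sub_eq_add_neg] using multipliable_one_add_of_summable (f := fun j => -(a * q ^ j))
    (by simpa only [norm_neg] using summable_norm_mul_pow hq a)

lemma qPochhammer_eq_one_sub_mul (a : 𝕜) :
    qPochhammer a q = (1 - a) * qPochhammer (a * q) q := by
  have hshift : (fun j : ℕ => 1 - a * q ^ (j + 1)) = fun j => 1 - a * q * q ^ j :=
    funext fun j => by ring
  unfold qPochhammer
  rw [tprod_eq_zero_mul' (hshift ▸ multipliable_one_sub_mul_pow hq (a * q)), hshift, pow_zero,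
    mul_one]

lemma qPochhammer_ne_zero {a : 𝕜} (ha : ∀ j, a * q ^ j ≠ 1) : qPochhammer a q ≠ 0 := by
  simpa only [qPochhammer, sub_eq_add_neg] using tprod_one_add_ne_zero_of_summable
    (fun j => by rw [← sub_eq_add_neg, sub_ne_zero]; exact (ha j).symm)
    (by simpa only [norm_neg] using summable_norm_mul_pow hq a)

lemma qPochhammer_pow_succ_ne_zero (k : ℕ) : qPochhammer (q ^ (k + 1)) q ≠ 0 := by
  refine qPochhammer_ne_zero hq fun j h => ?_
  have : ‖q ^ (k + 1) * q ^ j‖ < 1 := by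
    rw [← pow_add, norm_pow]
    exact pow_lt_one₀ (norm_nonneg q) hq (by omega)
  simp [h] at this

lemma continuous_qPochhammer : Continuous fun a : 𝕜 => qPochhammer a q := by
  refine continuous_iff_continuousAt.mpr fun a₀ => ?_
  simp only [ContinuousAt, qPochhammer, sub_eq_add_neg]
  refine tendsto_tprod_one_add_of_dominated_convergence
    ((summable_geometric_of_lt_one (norm_nonneg q) hq).mul_left (‖a₀‖ + 1))
    (fun j => ((continuous_mul_const _).neg).tendsto a₀) ?_
  filter_upwards [Metric.closedBall_mem_nhds a₀ one_pos] with a ha j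
  have : ‖a‖ ≤ ‖a₀‖ + 1 := by
    have := norm_le_norm_add_norm_sub' a a₀
    rw [Metric.mem_closedBall, dist_eq_norm] at ha
    linarith
  rw [norm_neg, norm_mul, norm_pow]
  gcongr

lemma sq_div_qPochhammer_eq_sub (hq0 : q ≠ 0) {a : 𝕜} (ha : qPochhammer a q ≠ 0) :
    a ^ 2 / qPochhammer a q =
      (a + q - 1) / (q * qPochhammer a q) - (a * q + q - 1) / (q * qPochhammer (a * q) q) := by
  rw [qPochhammer_eq_one_sub_mul hq a] at ha ⊢
  obtain ⟨h1, h2⟩ := mul_ne_zero_iff.mp ha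
  field_simp
  ring

lemma hasSum_sq_div_qPochhammer (hq0 : q ≠ 0) :
    HasSum (fun k : ℕ => (q ^ (k + 1)) ^ 2 / qPochhammer (q ^ (k + 1)) q)
      ((2 * q - 1) / (q * qPochhammer q q) - (q - 1) / q) := by
  set F : ℕ → 𝕜 := fun k => (q ^ (k + 1) + q - 1) / (q * qPochhammer (q ^ (k + 1)) q)
  have hterm (k : ℕ) : (q ^ (k + 1)) ^ 2 / qPochhammer (q ^ (k + 1)) q = F k - F (k + 1) := by
    rw [sq_div_qPochhammer_eq_sub hq hq0 (qPochhammer_pow_succ_ne_zero hq k), ← pow_succ]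
  have hpow : Tendsto (fun k : ℕ => q ^ (k + 1)) atTop (𝓝 0) :=
    (tendsto_pow_atTop_nhds_zero_of_norm_lt_one hq).comp (tendsto_add_atTop_nat 1)
  have hF : Tendsto F atTop (𝓝 ((0 + q - 1) / (q * qPochhammer 0 q))) :=
    ((hpow.add_const q).sub_const 1).div
      (tendsto_const_nhds.mul (((continuous_qPochhammer hq).tendsto 0).comp hpow)) (by simp [hq0])
  have hsummable : Summable fun k : ℕ => (q ^ (k + 1)) ^ 2 / qPochhammer (q ^ (k + 1)) q := by
    have hgeom : Summable fun k : ℕ => ‖q ^ 2‖ ^ (k + 1) :=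
      (summable_nat_add_iff 1).mpr <| summable_geometric_of_lt_one (norm_nonneg _)
        (by rw [norm_pow]; exact pow_lt_one₀ (norm_nonneg q) hq two_ne_zero)
    simp_rw [div_eq_mul_inv]
    refine Summable.mul_tendsto_const (c := (qPochhammer 0 q)⁻¹) ?_ ?_
    · simpa only [← pow_mul, mul_comm, norm_pow] using hgeom
    · rw [Nat.cofinite_eq_atTop]
      exact (((continuous_qPochhammer hq).tendsto 0).comp hpow).inv₀ (by simp)
  rw [hsummable.hasSum_iff_tendsto_nat]
  simp_rw [hterm, Finset.sum_range_sub']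
  convert tendsto_const_nhds.sub hF using 2
  simp only [F, qPochhammer_zero_left, zero_add, pow_one]
  ring

end

/-- For `0 < |q| < 1`,
`∑_{k≥1} q^{2k}/(q^k;q)_∞ = 2/(q;q)_∞ − 1/(q(q;q)_∞) + 1/q − 1`. -/
theorem stmt_12 (q : ℝ) (hq : |q| < 1) (hq0 : q ≠ 0) :
    (∑' k : ℕ, q ^ (2 * (k + 1)) / ∏' j : ℕ, (1 - q ^ (k + 1) * q ^ j))
      = 2 / (∏' j : ℕ, (1 - q * q ^ j))
        - 1 / (q * ∏' j : ℕ, (1 - q * q ^ j)) + 1 / q - 1 := by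
  have hq' : ‖q‖ < 1 := by rwa [Real.norm_eq_abs]
  have hA : qPochhammer q q ≠ 0 := by simpa using qPochhammer_pow_succ_ne_zero hq' 0
  have hsum := (hasSum_sq_div_qPochhammer hq' hq0).tsum_eq
  simp only [qPochhammer, ← pow_mul'] at hsum hA
  rw [hsum]
  field_simp
  ring
end

section
/- For every positive integer n and every m ≥ 1, the coefficient of q^n in ∑_{k≥1} q^{mk}/(q^k;q)_∞ equals the number of partitions of n in which the smallest part occurs at least m times. -/
/-!
Expanding every factor `1 / (1 - q ^ i)` of `1 / (q^k; q)_∞` as a geometric series shows that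
`q^{mk} / (q^k; q)_∞` is the generating function of the partitions made of `m` copies of `k`
together with arbitrary further parts `≥ k`; as `k` varies these are exactly the partitions whose
smallest part occurs at least `m` times, each obtained once.

The expansion `(q^M; q)_∞ · G_M = 1`, where `G_M` is the generating function of partitions into
parts `≥ M`, comes from the recursion `(1 - q^M) G_M = G_{M+1}` (according as `M` is a part or
not) together with `G_M → 1`, which is dominated convergence.
-/

open Filter Topology Finset

lemma Multiset.prod_map_pow_eq_pow_sum {ι M : Type*} [CommMonoid M] (s : Multiset ι)
    (f : ι → ℕ) (a : M) : (s.map fun i => a ^ f i).prod = a ^ (s.map f).sum := by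
  induction s using Multiset.induction_on with
  | empty => simp
  | cons i s ih => simp [ih, pow_add]

lemma Multiset.sum_map_add_const (s : Multiset ℕ) (M : ℕ) :
    (s.map (· + M)).sum = s.sum + card s * M := by
  simp [Multiset.sum_map_add]

lemma Multiset.compl_range_cons_zero :
    (Set.range (0 ::ₘ ·))ᶜ = Set.range (Multiset.map (· + 1)) := by
  ext s
  simp only [Set.mem_compl_iff, Set.mem_range, not_exists]
  constructor
  · intro h
    have h0 : 0 ∉ s := fun h0 => h _ (Multiset.cons_erase h0)
    refine ⟨s.map (· - 1), ?_⟩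
    rw [Multiset.map_map]
    refine (Multiset.map_congr rfl fun x hx => ?_).trans s.map_id'
    have : x ≠ 0 := fun hx0 => h0 (hx0 ▸ hx)
    simp only [Function.comp_apply]
    omega
  · rintro ⟨t, rfl⟩ u hu
    simpa using congrArg (0 ∈ ·) hu

lemma geom_sum_le_exp_div_one_sub {x c : ℝ} (hx : 0 ≤ x) (hxc : x ≤ c) (hc : c < 1)
    (N : ℕ) :
    ∑ k ∈ range N, x ^ k ≤ Real.exp (x / (1 - c)) :=
  calc ∑ k ∈ range N, x ^ k ≤ x ^ 0 / (1 - x) := by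
        rw [range_eq_Ico]; exact geom_sum_Ico_le_of_lt_one hx (hxc.trans_lt hc)
    _ = x / (1 - x) + 1 := by field_simp [(sub_pos.2 (hxc.trans_lt hc)).ne']; ring
    _ ≤ x / (1 - c) + 1 := by gcongr
    _ ≤ Real.exp (x / (1 - c)) := Real.add_one_le_exp _

lemma summable_multisetProd_of_summable_nonneg {ι : Type*} {f : ι → ℝ} {c : ℝ}
    (hf0 : ∀ i, 0 ≤ f i) (hfc : ∀ i, f i ≤ c) (hc : c < 1) (hfs : Summable f) :
    Summable fun s : Multiset ι => (s.map f).prod := by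
  classical
  have hprod_nonneg (s : Multiset ι) : 0 ≤ (s.map f).prod :=
    Multiset.prod_nonneg fun a ha => by
      obtain ⟨i, -, rfl⟩ := Multiset.mem_map.1 ha
      exact hf0 i
  refine summable_of_sum_le hprod_nonneg (c := Real.exp ((∑' i, f i) / (1 - c))) fun T => ?_
  let S := T.biUnion Multiset.toFinset
  let N := T.sup Multiset.card + 1
  let counts (s : Multiset ι) (i : ι) (_ : i ∈ S) : ℕ := s.count i
  have hsupp {s} (hs : s ∈ T) : s.toFinset ⊆ S := subset_biUnion_of_mem _ hs
  have hprod {s} (hs : s ∈ T) : (s.map f).prod = ∏ x ∈ S.attach, f x ^ counts s x x.2 := by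
    rw [prod_attach S (fun i => f i ^ s.count i), prod_multiset_map_count]
    refine prod_subset (hsupp hs) fun i _ hi => ?_
    rw [Multiset.count_eq_zero.2 (by simpa using hi), pow_zero]
  have hinj : Set.InjOn counts T := by
    intro s hs t ht hst
    ext i
    by_cases hi : i ∈ S
    · exact congr_fun₂ hst i hi
    · rw [Multiset.count_eq_zero.2 fun h => hi (hsupp hs (by simpa using h)),
        Multiset.count_eq_zero.2 fun h => hi (hsupp ht (by simpa using h))]
  have hbox : T.image counts ⊆ S.pi fun _ => range N := by
    intro p hp
    obtain ⟨s, hs, rfl⟩ := mem_image.1 hp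
    exact mem_pi.2 fun i _ => mem_range.2 <|
      Nat.lt_succ_of_le ((Multiset.count_le_card _ _).trans (le_sup hs))
  -- A multiset is determined by its multiplicities, so `T` injects into the box `S → range N`.
  calc ∑ s ∈ T, (s.map f).prod
      = ∑ p ∈ T.image counts, ∏ x ∈ S.attach, f x ^ p x x.2 := by
        rw [sum_image hinj]; exact sum_congr rfl fun s hs => hprod hs
    _ ≤ ∑ p ∈ S.pi fun _ => range N, ∏ x ∈ S.attach, f x ^ p x x.2 :=
        sum_le_sum_of_subset_of_nonneg hbox fun p _ _ =>
          prod_nonneg fun x _ => pow_nonneg (hf0 x) (p x x.2)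
    _ = ∏ i ∈ S, ∑ k ∈ range N, f i ^ k :=
        (prod_sum S (fun _ => range N) fun i k => f i ^ k).symm
    _ ≤ ∏ i ∈ S, Real.exp (f i / (1 - c)) :=
        prod_le_prod (fun i _ => sum_nonneg fun k _ => pow_nonneg (hf0 i) k)
          fun i _ => geom_sum_le_exp_div_one_sub (hf0 i) (hfc i) hc N
    _ = Real.exp ((∑ i ∈ S, f i) / (1 - c)) := by rw [← Real.exp_sum, sum_div]
    _ ≤ Real.exp ((∑' i, f i) / (1 - c)) := by
        gcongr
        exact hfs.sum_le_tsum _ fun i _ => hf0 i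

lemma summable_pow_sum_map_add {r : ℝ} (hr0 : 0 ≤ r) (hr1 : r < 1) {M : ℕ} (hM : 1 ≤ M) :
    Summable fun s : Multiset ℕ => r ^ (s.map (· + M)).sum := by
  simp_rw [← Multiset.prod_map_pow_eq_pow_sum]
  refine summable_multisetProd_of_summable_nonneg (c := r) (fun i => pow_nonneg hr0 _)
    (fun i => pow_le_of_le_one hr0 hr1.le (by omega)) hr1 ?_
  simpa [pow_add] using (summable_geometric_of_lt_one hr0 hr1).mul_right (r ^ M)

section

variable {𝕜 : Type*} [NormedField 𝕜] [CompleteSpace 𝕜] {q : 𝕜}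

lemma summable_pow_sum_map_add_of_norm_lt_one (hq : ‖q‖ < 1) {M : ℕ} (hM : 1 ≤ M) :
    Summable fun s : Multiset ℕ => q ^ (s.map (· + M)).sum :=
  .of_norm <| by simpa [norm_pow] using summable_pow_sum_map_add (norm_nonneg q) hq hM

/-- The generating function of partitions into parts `≥ M`: a multiset `s` encodes the
partition with parts `s.map (· + M)`. -/
noncomputable def partitionSeriesFrom (q : 𝕜) (M : ℕ) : 𝕜 :=
  ∑' s : Multiset ℕ, q ^ (s.map (· + M)).sum

lemma partitionSeriesFrom_eq (hq : ‖q‖ < 1) {M : ℕ} (hM : 1 ≤ M) :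
    partitionSeriesFrom q M = q ^ M * partitionSeriesFrom q M + partitionSeriesFrom q (M + 1) := by
  conv_lhs => rw [partitionSeriesFrom,
    ← (summable_pow_sum_map_add_of_norm_lt_one hq hM).tsum_subtype_add_tsum_subtype_compl
      (Set.range (0 ::ₘ ·)), Multiset.compl_range_cons_zero,
    tsum_range (fun s : Multiset ℕ => q ^ (s.map (· + M)).sum)
      fun _ _ => (Multiset.cons_inj_right 0).1,
    tsum_range (fun s : Multiset ℕ => q ^ (s.map (· + M)).sum)
      (Multiset.map_injective (add_left_injective 1))]
  rw [partitionSeriesFrom, partitionSeriesFrom, ← tsum_mul_left]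
  congr 1
  · simp [pow_add]
  · simp [Multiset.map_map, add_assoc, add_comm 1]

lemma one_sub_pow_mul_partitionSeriesFrom (hq : ‖q‖ < 1) {M : ℕ} (hM : 1 ≤ M) :
    (1 - q ^ M) * partitionSeriesFrom q M = partitionSeriesFrom q (M + 1) := by
  linear_combination partitionSeriesFrom_eq hq hM

lemma prod_range_one_sub_pow_mul_partitionSeriesFrom (hq : ‖q‖ < 1) {M : ℕ} (hM : 1 ≤ M)
    (J : ℕ) : (∏ j ∈ range J, (1 - q ^ (M + j))) * partitionSeriesFrom q M =
      partitionSeriesFrom q (M + J) := by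
  induction J with
  | zero => simp
  | succ J ih =>
    rw [prod_range_succ, mul_right_comm, ih, mul_comm,
      one_sub_pow_mul_partitionSeriesFrom hq (by omega), add_assoc]

/-- Only the empty partition survives as `M → ∞`; the terms are dominated by those at
`M = 1`. -/
lemma tendsto_partitionSeriesFrom_atTop (hq : ‖q‖ < 1) :
    Tendsto (partitionSeriesFrom q) atTop (𝓝 1) := by
  classical
  have hlim : ∑' s : Multiset ℕ, (if s = 0 then (1 : 𝕜) else 0) = 1 :=
    tsum_ite_eq 0 fun _ => 1
  rw [← hlim]
  refine tendsto_tsum_of_dominated_convergence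
    (summable_pow_sum_map_add (norm_nonneg q) hq le_rfl) (fun s => ?_) ?_
  · simp_rw [Multiset.sum_map_add_const, pow_add, pow_mul]
    rcases eq_or_ne s 0 with rfl | hs
    · simp
    · rw [if_neg hs]
      have hlt : ‖q ^ Multiset.card s‖ < 1 := by
        rw [norm_pow]; exact pow_lt_one₀ (norm_nonneg q) hq (Multiset.card_pos.2 hs).ne'
      simpa using (tendsto_pow_atTop_nhds_zero_of_norm_lt_one hlt).const_mul (q ^ s.sum)
  · filter_upwards [eventually_ge_atTop 1] with M hM s
    rw [norm_pow]
    exact pow_le_pow_of_le_one (norm_nonneg q) hq.le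
      (Multiset.sum_map_le_sum_map _ _ fun i _ => by omega)

lemma tprod_one_sub_pow_mul_partitionSeriesFrom (hq : ‖q‖ < 1) {M : ℕ} (hM : 1 ≤ M) :
    (∏' j, (1 - q ^ (M + j))) * partitionSeriesFrom q M = 1 := by
  have hmul : Multipliable fun j => 1 - q ^ (M + j) := by
    simp_rw [sub_eq_add_neg]
    refine multipliable_one_add_of_summable ?_
    simpa [norm_pow, pow_add] using
      (summable_geometric_of_lt_one (norm_nonneg q) hq).mul_left (‖q‖ ^ M)
  refine tendsto_nhds_unique (hmul.hasProd.tendsto_prod_nat.mul_const _) ?_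
  simp_rw [prod_range_one_sub_pow_mul_partitionSeriesFrom hq hM]
  simpa only [Function.comp_def, add_comm _ M] using
    (tendsto_partitionSeriesFrom_atTop hq).comp (tendsto_add_atTop_nat M)

end

def partsWithSmallest (m k : ℕ) (s : Multiset ℕ) : Multiset ℕ :=
  Multiset.replicate m (k + 1) + s.map (· + (k + 1))

lemma sum_partsWithSmallest (m k : ℕ) (s : Multiset ℕ) :
    (partsWithSmallest m k s).sum = m * (k + 1) + (s.map (· + (k + 1))).sum := by
  simp [partsWithSmallest]

lemma le_of_mem_partsWithSmallest {m k t : ℕ} {s : Multiset ℕ}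
    (ht : t ∈ partsWithSmallest m k s) : k + 1 ≤ t := by
  rcases Multiset.mem_add.1 ht with h | h
  · exact (Multiset.eq_of_mem_replicate h).ge
  · obtain ⟨i, -, rfl⟩ := Multiset.mem_map.1 h
    omega

lemma mem_partsWithSmallest {m : ℕ} (hm : 1 ≤ m) (k : ℕ) (s : Multiset ℕ) :
    k + 1 ∈ partsWithSmallest m k s :=
  Multiset.mem_add.2 <| .inl <| Multiset.mem_replicate.2 ⟨by omega, rfl⟩

lemma le_count_partsWithSmallest (m k : ℕ) (s : Multiset ℕ) :
    m ≤ (partsWithSmallest m k s).count (k + 1) := by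
  simp [partsWithSmallest]

lemma partsWithSmallest_injective {m : ℕ} (hm : 1 ≤ m) :
    Function.Injective fun p : ℕ × Multiset ℕ => partsWithSmallest m p.1 p.2 := by
  rintro ⟨k, s⟩ ⟨k', s'⟩ h
  dsimp only at h
  have hk : k = k' := le_antisymm
    (Nat.succ_le_succ_iff.1 (le_of_mem_partsWithSmallest (h ▸ mem_partsWithSmallest hm k' s')))
    (Nat.succ_le_succ_iff.1 (le_of_mem_partsWithSmallest (h ▸ mem_partsWithSmallest hm k s)))
  subst hk
  exact Prod.ext rfl (Multiset.map_injective (add_left_injective _) (add_left_cancel h))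

lemma exists_partsWithSmallest_eq {m σ : ℕ} {π : Multiset ℕ} (hσ : σ ∈ π) (hσ0 : 0 < σ)
    (hmin : ∀ t ∈ π, σ ≤ t) (hcount : m ≤ π.count σ) :
    ∃ k s, partsWithSmallest m k s = π := by
  obtain ⟨k, rfl⟩ : ∃ k, σ = k + 1 := ⟨σ - 1, by omega⟩
  have hrep : Multiset.replicate m (k + 1) ≤ π := Multiset.le_count_iff_replicate_le.1 hcount
  refine ⟨k, (π - Multiset.replicate m (k + 1)).map (· - (k + 1)), ?_⟩
  rw [partsWithSmallest, Multiset.map_map]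
  conv_rhs => rw [← add_tsub_cancel_of_le hrep]
  congr 1
  refine (Multiset.map_congr rfl fun x hx => ?_).trans (Multiset.map_id' _)
  have := hmin x (Multiset.mem_of_le (Multiset.sub_le_self _ _) hx)
  simp only [Function.comp_apply]
  omega

abbrev SmallestPartRepeated (m : ℕ) :=
  Σ n : ℕ, {π : (n + 1).Partition //
    ∃ s ∈ π.parts, (∀ t ∈ π.parts, s ≤ t) ∧ m ≤ π.parts.count s}

lemma SmallestPartRepeated.ext {m : ℕ} {x y : SmallestPartRepeated m}
    (h : x.2.1.parts = y.2.1.parts) : x = y := by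
  obtain ⟨n, π, hπ⟩ := x
  obtain ⟨n', π', hπ'⟩ := y
  obtain rfl : n = n' := by simpa [π.parts_sum, π'.parts_sum] using congrArg Multiset.sum h
  exact Sigma.ext rfl (heq_of_eq (Subtype.ext (Nat.Partition.ext h)))

def toSmallestPartRepeated {m : ℕ} (hm : 1 ≤ m) (p : ℕ × Multiset ℕ) :
    SmallestPartRepeated m :=
  ⟨(partsWithSmallest m p.1 p.2).sum - 1,
    ⟨⟨partsWithSmallest m p.1 p.2,
      fun ht => (le_of_mem_partsWithSmallest ht).trans_lt' p.1.succ_pos,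
      Nat.succ_pred_eq_of_pos (p.1.succ_pos.trans_le
        (Multiset.le_sum_of_mem (mem_partsWithSmallest hm p.1 p.2))) |>.symm⟩,
    ⟨p.1 + 1, mem_partsWithSmallest hm p.1 p.2, fun _ => le_of_mem_partsWithSmallest,
      le_count_partsWithSmallest m p.1 p.2⟩⟩⟩

lemma toSmallestPartRepeated_fst_add_one {m : ℕ} (hm : 1 ≤ m) (p : ℕ × Multiset ℕ) :
    (toSmallestPartRepeated hm p).1 + 1 = (partsWithSmallest m p.1 p.2).sum :=
  (toSmallestPartRepeated hm p).2.1.parts_sum.symm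

lemma toSmallestPartRepeated_bijective {m : ℕ} (hm : 1 ≤ m) :
    Function.Bijective (toSmallestPartRepeated hm) := by
  refine ⟨fun p p' h => partsWithSmallest_injective hm (congrArg (·.2.1.parts) h), ?_⟩
  rintro ⟨n, π, σ, hσ, hmin, hcount⟩
  obtain ⟨k, s, hks⟩ := exists_partsWithSmallest_eq hσ (π.parts_pos hσ) hmin hcount
  exact ⟨(k, s), SmallestPartRepeated.ext hks⟩

section

variable {𝕜 : Type*} [NormedField 𝕜] [CompleteSpace 𝕜] {q : 𝕜}

lemma summable_pow_sum_partsWithSmallest (hq : ‖q‖ < 1) {m : ℕ} (hm : 1 ≤ m) :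
    Summable fun p : ℕ × Multiset ℕ => q ^ (partsWithSmallest m p.1 p.2).sum := by
  have hr := norm_nonneg q
  refine .of_norm_bounded ((summable_geometric_of_lt_one hr hq).mul_of_nonneg
    (summable_pow_sum_map_add hr hq le_rfl) (fun _ => pow_nonneg hr _) fun _ => pow_nonneg hr _)
    fun ⟨k, s⟩ => ?_
  rw [norm_pow, ← pow_add]
  refine pow_le_pow_of_le_one hr hq.le ?_
  simp only [sum_partsWithSmallest, Multiset.sum_map_add_const]
  nlinarith

lemma pow_div_tprod_eq_tsum_partsWithSmallest (hq : ‖q‖ < 1) (m k : ℕ) :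
    q ^ (m * (k + 1)) / ∏' j, (1 - q ^ (k + 1) * q ^ j) =
      ∑' s, q ^ (partsWithSmallest m k s).sum := by
  simp_rw [← pow_add, div_eq_mul_inv,
    inv_eq_of_mul_eq_one_right (tprod_one_sub_pow_mul_partitionSeriesFrom hq k.succ_pos),
    partitionSeriesFrom, ← tsum_mul_left, sum_partsWithSmallest, pow_add]

end

/-- For `m ≥ 1` and `|q| < 1`, the series `∑_{k≥1} q^{mk}/(q^k;q)_∞` is the generating
function for the number of partitions of `n` whose smallest part occurs at least `m`
times; i.e. the coefficient of `q^n` is that count. -/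
theorem stmt_13 (m : ℕ) (hm : 1 ≤ m) (q : ℝ) (hq : |q| < 1) :
    (∑' k : ℕ, q ^ (m * (k + 1)) / ∏' j : ℕ, (1 - q ^ (k + 1) * q ^ j))
      = ∑' n : ℕ, (Nat.card {π : (n + 1).Partition //
          ∃ s ∈ π.parts, (∀ t ∈ π.parts, s ≤ t) ∧ m ≤ π.parts.count s} : ℝ) * q ^ (n + 1) := by
  rw [← Real.norm_eq_abs] at hq
  let e := Equiv.ofBijective _ (toSmallestPartRepeated_bijective hm)
  have hsum := summable_pow_sum_partsWithSmallest hq hm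
  have hsum' : Summable fun x : SmallestPartRepeated m => q ^ (x.1 + 1) := by
    rw [← e.summable_iff]
    simpa [Function.comp_def, e, toSmallestPartRepeated_fst_add_one] using hsum
  calc _ = ∑' k, ∑' s, q ^ (partsWithSmallest m k s).sum :=
        tsum_congr (pow_div_tprod_eq_tsum_partsWithSmallest hq m)
    _ = ∑' p : ℕ × Multiset ℕ, q ^ (partsWithSmallest m p.1 p.2).sum :=
        (hsum.tsum_prod' hsum.prod_factor).symm
    _ = ∑' x : SmallestPartRepeated m, q ^ (x.1 + 1) := by
        rw [← e.tsum_eq]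
        simp [e, toSmallestPartRepeated_fst_add_one]
    _ = _ := by
        rw [hsum'.tsum_sigma]
        simp [tsum_const, nsmul_eq_mul]
end
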